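/- Let X be a random variable with values in a measurable space 𝒳, φ : 𝒳 → ℝ^d measurable with E[‖φ(X)‖] < ∞, and suppose there exists c ∈ ℝ^d such that cᵀφ(X) is almost surely equal to a nonzero constant. Then there exist n ≤ d points x₁,…,xₙ ∈ 𝒳 with φ(xᵢ) in the support of the law of φ(X), and positive weights w₁,…,wₙ summing appropriately, such that E[φ(X)] = Σᵢ wᵢ φ(xᵢ). -/

import Mathlib

open MeasureTheory

/-- The support of a measure on `ℝ^d`: the set of points all of whose open
neighborhoods have positive measure. -/
def measSupport {d : ℕ} (μ : Measure (Fin d → ℝ)) : Set (Fin d → ℝ) :=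
  {y | ∀ U : Set (Fin d → ℝ), IsOpen U → y ∈ U → μ U ≠ 0}

/-!
The barycenter `b` of `μ = law(φ(X))` lies in the convex hull of `supp μ ∩ range (φ ∘ X)`
itself, not only in its closure. If that set affinely spans the whole space, a functional `f`
separating `b` from the interior of the hull is `≤ f b` on `supp μ` and equal to `f b` on
average, which forces `supp μ`, hence the hull, into a hyperplane; otherwise `μ` is pushed
forward to the lower-dimensional affine hull and one inducts on the dimension. Carathéodory then
writes `b` with affinely independent points of `supp μ`; as `supp μ` lies in the affine
hyperplane `cᵀy = z` (a genuine one, since `z ≠ 0` forces `c ≠ 0`), their differences span at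
most `d - 1` dimensions, so there are at most `d` of them.
-/

open Set Module

lemma measSupport_eq_support {d : ℕ} (μ : Measure (Fin d → ℝ)) : measSupport μ = μ.support := by
  ext y
  simp only [measSupport, Measure.support_eq_forall_isOpen, mem_ofPred_eq, pos_iff_ne_zero]
  exact forall_congr' fun U => by tauto

section Thick

variable {X : Type*} [MeasurableSpace X]

/-- A thick set in the sense of Halmos: `Rᶜ` has inner measure zero. -/
def IsThick (μ : Measure X) (R : Set X) : Prop :=
  ∀ T, MeasurableSet T → μ T ≠ 0 → (T ∩ R).Nonempty

variable {μ : Measure X} {R : Set X}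

lemma isThick_map_range {Ω : Type*} [MeasurableSpace Ω] {P : Measure Ω} {g : Ω → X}
    (hg : Measurable g) : IsThick (P.map g) (range g) := by
  intro T hT hPT
  rw [Measure.map_apply hg hT] at hPT
  obtain ⟨ω, hω⟩ := nonempty_of_measure_ne_zero hPT
  exact ⟨g ω, hω, mem_range_self ω⟩

variable [TopologicalSpace X] [HereditarilyLindelofSpace X]

lemma IsThick.inter_support [OpensMeasurableSpace X] (hR : IsThick μ R) :
    IsThick μ (μ.support ∩ R) := by
  intro T hT hμT
  rw [← measure_inter_conull Measure.measure_compl_support] at hμT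
  obtain ⟨y, ⟨hyT, hyS⟩, hyR⟩ :=
    hR _ (hT.inter Measure.isClosed_support.measurableSet) hμT
  exact ⟨y, hyT, hyS, hyR⟩

lemma IsThick.support_subset_closure [OpensMeasurableSpace X] (hR : IsThick μ R) :
    μ.support ⊆ closure (μ.support ∩ R) := by
  intro y hy
  refine mem_closure_iff.2 fun U hU hyU => hR.inter_support U hU.measurableSet ?_
  exact ((Measure.mem_support_iff_forall y).1 hy U (hU.mem_nhds hyU)).ne'

lemma IsThick.map [OpensMeasurableSpace X] {Y : Type*} [MeasurableSpace Y] {f : X → Y}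
    (hR : IsThick μ R) (hf : Measurable f) : IsThick (μ.map f) (f '' (μ.support ∩ R)) := by
  intro T hT hνT
  rw [Measure.map_apply hf hT] at hνT
  obtain ⟨y, hyT, hyR⟩ := hR.inter_support _ (hf hT) hνT
  exact ⟨f y, hyT, y, hyR, rfl⟩

end Thick

section Barycenter

variable {E : Type*} [NormedAddCommGroup E] [NormedSpace ℝ E] [CompleteSpace E]
  [HereditarilyLindelofSpace E] [MeasurableSpace E]
  {μ : Measure E} [IsProbabilityMeasure μ]

lemma support_subset_setOf_eq_of_le_integral (hμ : Integrable id μ) (f : StrongDual ℝ E)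
    (hle : ∀ y ∈ μ.support, f y ≤ f (∫ y, y ∂μ)) :
    μ.support ⊆ {y | f y = f (∫ y, y ∂μ)} := by
  set b := ∫ y, y ∂μ
  have hfi : Integrable (fun y => f y) μ := f.integrable_comp hμ
  have hsupp : ∀ᵐ y ∂μ, y ∈ μ.support := Measure.support_mem_ae
  have hgap_nonneg : 0 ≤ᵐ[μ] fun y => f b - f y :=
    hsupp.mono fun y hy => sub_nonneg.2 (hle y hy)
  have hfb : ∫ y, f y ∂μ = f b := f.integral_comp_comm hμ
  have hgap_int : ∫ y, (f b - f y) ∂μ = 0 := by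
    rw [integral_sub (integrable_const _) hfi, integral_const, probReal_univ, one_smul, hfb,
      sub_self]
  have hgap_zero := (integral_eq_zero_iff_of_nonneg_ae hgap_nonneg
    ((integrable_const _).sub hfi)).1 hgap_int
  refine Measure.support_subset_of_isClosed (isClosed_eq f.continuous continuous_const) ?_
  filter_upwards [hgap_zero] with y hy
  exact (sub_eq_zero.1 hy).symm

lemma integral_mem_convexHull_of_interior_nonempty (hμ : Integrable id μ) {s : Set E}
    (hsμ : s ⊆ μ.support) (hμs : μ.support ⊆ closure s)
    (hint : (interior (convexHull ℝ s)).Nonempty) :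
    ∫ y, y ∂μ ∈ convexHull ℝ s := by
  set K := convexHull ℝ s
  by_contra hb
  obtain ⟨f, hf⟩ := geometric_hahn_banach_open_point (convex_convexHull ℝ s).interior
    isOpen_interior fun h => hb (interior_subset h)
  have hμK : μ.support ⊆ closure (interior K) := by
    rw [(convex_convexHull ℝ s).closure_interior_eq_closure_of_nonempty_interior hint]
    exact hμs.trans (closure_mono (subset_convexHull ℝ s))
  have hle : ∀ y ∈ μ.support, f y ≤ f (∫ y, y ∂μ) := fun y hy =>
    closure_minimal (fun a ha => (hf a ha).le) (isClosed_le f.continuous continuous_const) (hμK hy)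
  have hK_level : K ⊆ {y | f y = f (∫ y, y ∂μ)} :=
    convexHull_min (hsμ.trans (support_subset_setOf_eq_of_le_integral hμ f hle))
      (convex_hyperplane f.isLinear _)
  obtain ⟨a, ha⟩ := hint
  exact (hf a ha).ne (hK_level (interior_subset ha))

end Barycenter

lemma AffineSubspace.exists_retraction {E : Type*} [NormedAddCommGroup E] [NormedSpace ℝ E]
    [FiniteDimensional ℝ E] (A : AffineSubspace ℝ E) {p : E} (hp : p ∈ A) :
    ∃ π : E →L[ℝ] A.direction, ∀ y ∈ A, (π (y - p) : E) + p = y := by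
  obtain ⟨π, hπ⟩ := A.direction.subtype.exists_leftInverse_of_injective A.direction.ker_subtype
  refine ⟨LinearMap.toContinuousLinearMap π, fun y hy => ?_⟩
  have hyp : y - p ∈ A.direction := by simpa using AffineSubspace.vsub_mem_direction hy hp
  have hπy : π (y - p) = ⟨y - p, hyp⟩ := LinearMap.congr_fun hπ ⟨y - p, hyp⟩
  simp [hπy]

section Pushforward

variable {E F : Type*} [NormedAddCommGroup E] [NormedSpace ℝ E]
  [MeasurableSpace E] [OpensMeasurableSpace E]
  [NormedAddCommGroup F] [NormedSpace ℝ F] [SecondCountableTopology F]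
  [MeasurableSpace F] [BorelSpace F]
  {μ : Measure E} [IsProbabilityMeasure μ]

lemma integrable_id_map_clm_sub (hμ : Integrable id μ) (L : E →L[ℝ] F) (p : E) :
    Integrable id (μ.map fun y => L (y - p)) :=
  (integrable_map_measure aestronglyMeasurable_id
    (L.continuous.comp (continuous_sub_right p)).measurable.aemeasurable).2
    (L.integrable_comp (hμ.sub (integrable_const p)))

lemma integral_id_map_clm_sub [CompleteSpace E] [CompleteSpace F] (hμ : Integrable id μ)
    (L : E →L[ℝ] F) (p : E) :
    ∫ w, w ∂(μ.map fun y => L (y - p)) = L ((∫ y, y ∂μ) - p) := by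
  have hsub : Integrable (fun y => y - p) μ := hμ.sub (integrable_const p)
  calc ∫ w, id w ∂(μ.map fun y => L (y - p)) = ∫ y, L (y - p) ∂μ :=
        integral_map (L.continuous.comp (continuous_sub_right p)).measurable.aemeasurable
          aestronglyMeasurable_id
    _ = L (∫ y, (y - p) ∂μ) := L.integral_comp_comm hsub
    _ = L ((∫ y, y ∂μ) - p) := by
        rw [integral_sub (f := fun y => y) hμ (integrable_const p), integral_const,
          probReal_univ, one_smul]

end Pushforward

theorem integral_mem_convexHull_support_inter {E : Type*} [NormedAddCommGroup E]
    [NormedSpace ℝ E] [FiniteDimensional ℝ E] [MeasurableSpace E] [BorelSpace E]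
    (μ : Measure E) [IsProbabilityMeasure μ] (hμ : Integrable id μ) {R : Set E}
    (hR : IsThick μ R) : ∫ y, y ∂μ ∈ convexHull ℝ (μ.support ∩ R) := by
  induction hn : finrank ℝ E using Nat.strong_induction_on generalizing E with
  | _ n IH =>
  set S := μ.support
  set b := ∫ y, y ∂μ
  have hSR : S ⊆ closure (S ∩ R) := hR.support_subset_closure
  by_cases htop : affineSpan ℝ (S ∩ R) = ⊤
  · exact integral_mem_convexHull_of_interior_nonempty hμ inter_subset_left hSR
      (interior_convexHull_nonempty_iff_affineSpan_eq_top.2 htop)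
  set A := affineSpan ℝ (S ∩ R)
  have hA : IsClosed (A : Set E) := A.closed_of_finiteDimensional
  have hSA : S ⊆ A := hSR.trans (closure_minimal (subset_affineSpan ℝ _) hA)
  have hbA : b ∈ A :=
    A.convex.integral_mem hA (Filter.eventually_of_mem Measure.support_mem_ae hSA) hμ
  obtain ⟨p, hp⟩ : (S ∩ R).Nonempty := by
    simpa using hR.inter_support univ MeasurableSet.univ (by simp)
  have hpA : p ∈ A := subset_affineSpan ℝ _ hp
  have hdim : finrank ℝ A.direction < n := hn ▸ Submodule.finrank_lt fun h =>
    htop ((AffineSubspace.direction_eq_top_iff_of_nonempty ⟨p, hpA⟩).1 h)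
  obtain ⟨π, hπ⟩ := A.exists_retraction hpA
  let Φ : E → A.direction := fun y => π (y - p)
  let Ψ : A.direction →ᵃ[ℝ] E :=
    (AffineEquiv.vaddConst ℝ p).toAffineMap.comp A.direction.subtype.toAffineMap
  have hΨΦ : ∀ y ∈ A, Ψ (Φ y) = y := hπ
  have : IsProbabilityMeasure (μ.map Φ) :=
    Measure.isProbabilityMeasure_map (by fun_prop : Measurable Φ).aemeasurable
  have hmem := IH _ hdim (μ.map Φ) (integrable_id_map_clm_sub hμ π p)
    (hR.map (by fun_prop : Measurable Φ)) rfl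
  have himg : Ψ '' ((μ.map Φ).support ∩ Φ '' (S ∩ R)) ⊆ S ∩ R := by
    rintro _ ⟨_, ⟨-, y, hy, rfl⟩, rfl⟩
    rwa [hΨΦ y (subset_affineSpan ℝ _ hy)]
  rw [← hΨΦ b hbA]
  change Ψ (π (b - p)) ∈ _
  rw [← integral_id_map_clm_sub hμ π p]
  exact convexHull_mono himg (Ψ.image_convexHull _ ▸ mem_image_of_mem Ψ hmem)

theorem exists_pos_convex_combination_le_finrank_of_subset_hyperplane {E : Type*}
    [AddCommGroup E] [Module ℝ E] [FiniteDimensional ℝ E] {s : Set E} {x : E}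
    (hx : x ∈ convexHull ℝ s) {f : E →ₗ[ℝ] ℝ} (hf : f ≠ 0) {z : ℝ} (hs : ∀ y ∈ s, f y = z) :
    ∃ n ≤ finrank ℝ E, ∃ (p : Fin n → E) (w : Fin n → ℝ),
      (∀ i, p i ∈ s) ∧ (∀ i, 0 < w i) ∧ ∑ i, w i = 1 ∧ ∑ i, w i • p i = x := by
  obtain ⟨ι, _, p, w, hps, hind, hw, hw1, hpx⟩ := eq_pos_convex_span_of_mem_convexHull hx
  have hspan : vectorSpan ℝ (range p) ≤ LinearMap.ker f := by
    rw [vectorSpan_def, Submodule.span_le]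
    rintro _ ⟨_, ⟨i, rfl⟩, _, ⟨j, rfl⟩, rfl⟩
    simp [hs _ (hps ⟨i, rfl⟩), hs _ (hps ⟨j, rfl⟩)]
  have hker : finrank ℝ (LinearMap.ker f) < finrank ℝ E :=
    Submodule.finrank_lt (by rwa [Ne, LinearMap.ker_eq_top])
  have hcard : Fintype.card ι ≤ finrank ℝ E := by
    have := Submodule.finrank_mono hspan
    have := hind.card_le_finrank_succ
    omega
  let e := (Fintype.equivFin ι).symm
  refine ⟨Fintype.card ι, hcard, p ∘ e, w ∘ e, fun i => hps (mem_range_self _), fun i => hw _,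
    ?_, ?_⟩
  · exact (e.sum_comp w).trans hw1
  · exact (e.sum_comp fun i => w i • p i).trans hpx

/-- Sharpened generalized Tchakaloff theorem: if moreover `cᵀφ(X)` is almost surely a
nonzero constant, then `n ≤ d` points suffice, and the weights sum to `1`. -/
theorem generalized_tchakaloff_sharp {d : ℕ} {𝒳 : Type*} [MeasurableSpace 𝒳]
    {Ω : Type*} [MeasurableSpace Ω] (P : Measure Ω) [IsProbabilityMeasure P]
    (X : Ω → 𝒳) (hX : Measurable X)
    (φ : 𝒳 → Fin d → ℝ) (hφ : Measurable φ)
    (hint : Integrable (fun ω => φ (X ω)) P)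
    (c : Fin d → ℝ) (z : ℝ) (hz : z ≠ 0)
    (hconst : ∀ᵐ ω ∂P, ∑ i, c i * φ (X ω) i = z) :
    ∃ (n : ℕ), n ≤ d ∧ ∃ (x : Fin n → 𝒳) (w : Fin n → ℝ),
      (∀ i, φ (x i) ∈ measSupport (P.map (fun ω => φ (X ω)))) ∧
      (∀ i, 0 < w i) ∧
      (∑ i, w i = 1) ∧
      (∫ ω, φ (X ω) ∂P) = ∑ i, w i • φ (x i) := by
  set g := fun ω => φ (X ω)
  have hg : Measurable g := hφ.comp hX
  set μ := P.map g
  have : IsProbabilityMeasure μ := Measure.isProbabilityMeasure_map hg.aemeasurable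
  have hμ : Integrable id μ :=
    (integrable_map_measure aestronglyMeasurable_id hg.aemeasurable).2 hint
  have hbary : ∫ y, y ∂μ = ∫ ω, g ω ∂P := integral_map hg.aemeasurable aestronglyMeasurable_id
  have hmem := integral_mem_convexHull_support_inter μ hμ (isThick_map_range hg)
  let f : (Fin d → ℝ) →ₗ[ℝ] ℝ := dotProductBilin ℝ ℝ c
  have hH : IsClosed {y | f y = z} := isClosed_eq f.continuous_of_finiteDimensional continuous_const
  have hsupp : μ.support ⊆ {y | f y = z} :=
    Measure.support_subset_of_isClosed hH ((ae_map_iff hg.aemeasurable hH.measurableSet).2 hconst)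
  have hf : f ≠ 0 := by
    obtain ⟨ω, hω⟩ := hconst.exists
    exact fun h0 => hz (hω.symm.trans (congrArg (· (g ω)) h0))
  obtain ⟨n, hn, p, w, hp, hw, hw1, hpw⟩ :=
    exists_pos_convex_combination_le_finrank_of_subset_hyperplane hmem hf fun y hy => hsupp hy.1
  choose x hx using fun i => (hp i).2
  refine ⟨n, hn.trans_eq (finrank_fin_fun ℝ), fun i => X (x i), w, fun i => ?_, hw, hw1, ?_⟩
  · rw [measSupport_eq_support]
    change g (x i) ∈ μ.support
    exact hx i ▸ (hp i).1
  · rw [← hbary, ← hpw]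
    exact Finset.sum_congr rfl fun i _ => by rw [← hx i]
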